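/- arXiv:1606.07592 — 9 statements merged into one kernel-verified Lean document; each statement's English description precedes it below -/
import Mathlib

section
/- Let S be a ring graded by a group G with R = S_e. Then S is epsilon-strongly graded by G if and only if S is symmetrically graded (i.e. S_g S_{g⁻¹} S_g = S_g for all g) and for every g ∈ G the R-ideal S_g S_{g⁻¹} is unital. -/
/-!
Taking `h = 0` in `S_g S_h = S_g S_{g⁻¹} S_{gh}` gives symmetry, since `S_g S_e = S_g`.
Conversely, symmetry lets one replace `S_g` by `S_g S_{g⁻¹} S_g` (resp. `S_h` by `S_h S_{h⁻¹} S_h`),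
and the inclusions `S_a S_b ⊆ S_{ab}` then give both epsilon-strong identities.
-/

open Pointwise

variable {S : Type*} [Ring S] {ι : Type*} [AddGroup ι]

/-- `I` is a unital ideal of the principal component `𝒜 0`. -/
def IsUnitalIdealOfZero (𝒜 : ι → AddSubgroup S) (I : AddSubgroup S) : Prop :=
  I ≤ 𝒜 0 ∧ (∀ r ∈ 𝒜 0, ∀ x ∈ I, r * x ∈ I ∧ x * r ∈ I) ∧
    ∃ e ∈ I, ∀ x ∈ I, e * x = x ∧ x * e = x

/-- `S` is epsilon-strongly graded by the (additively written) group `ι`: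
for each `g`, `𝒜 g * 𝒜 (-g)` is a unital ideal of `𝒜 0` and
`𝒜 g * 𝒜 h = (𝒜 g * 𝒜 (-g)) * 𝒜 (g+h) = 𝒜 (g+h) * (𝒜 (-h) * 𝒜 h)`. -/
def IsEpsilonStronglyGraded (𝒜 : ι → AddSubgroup S) : Prop :=
  (∀ g : ι, IsUnitalIdealOfZero 𝒜 (𝒜 g * 𝒜 (-g))) ∧
    ∀ g h : ι, 𝒜 g * 𝒜 h = (𝒜 g * 𝒜 (-g)) * 𝒜 (g + h) ∧
      𝒜 g * 𝒜 h = 𝒜 (g + h) * (𝒜 (-h) * 𝒜 h)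

namespace AddSubgroup

variable {R : Type*}

section NonUnitalNonAssocRing

variable [NonUnitalNonAssocRing R] {M N P Q : AddSubgroup R}

theorem mul_mem_mul {m n : R} (hm : m ∈ M) (hn : n ∈ N) : m * n ∈ M * N :=
  AddSubmonoid.mul_mem_mul hm hn

theorem mul_le : M * N ≤ P ↔ ∀ m ∈ M, ∀ n ∈ N, m * n ∈ P :=
  AddSubmonoid.mul_le

@[gcongr]
theorem mul_le_mul (hMP : M ≤ P) (hNQ : N ≤ Q) : M * N ≤ P * Q :=
  mul_le.2 fun _ hm _ hn => mul_mem_mul (hMP hm) (hNQ hn)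

end NonUnitalNonAssocRing

instance [NonUnitalRing R] : Semigroup (AddSubgroup R) :=
  toAddSubmonoid_injective.semigroup _ mul_toAddSubmonoid

end AddSubgroup

section GradedMonoid

variable {ι : Type*} [AddMonoid ι] (𝒜 : ι → AddSubgroup S) [SetLike.GradedMonoid 𝒜]

theorem graded_mul_le (g h : ι) : 𝒜 g * 𝒜 h ≤ 𝒜 (g + h) :=
  AddSubgroup.mul_le.2 fun _ ha _ hb => SetLike.mul_mem_graded ha hb

theorem graded_mul_zero (g : ι) : 𝒜 g * 𝒜 0 = 𝒜 g := by
  refine le_antisymm (by simpa only [add_zero] using graded_mul_le 𝒜 g 0) fun x hx => ?_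
  simpa only [mul_one] using AddSubgroup.mul_mem_mul hx (SetLike.one_mem_graded 𝒜)

end GradedMonoid

def IsSymmetricallyGraded (𝒜 : ι → AddSubgroup S) : Prop :=
  ∀ g : ι, 𝒜 g * 𝒜 (-g) * 𝒜 g = 𝒜 g

section Symmetric

variable {𝒜 : ι → AddSubgroup S} [SetLike.GradedMonoid 𝒜]

theorem IsEpsilonStronglyGraded.isSymmetricallyGraded (h𝒜 : IsEpsilonStronglyGraded 𝒜) :
    IsSymmetricallyGraded 𝒜 := fun g => by
  simpa only [add_zero, graded_mul_zero] using ((h𝒜.2 g 0).1).symm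

theorem IsSymmetricallyGraded.mul_eq_left (h𝒜 : IsSymmetricallyGraded 𝒜) (g h : ι) :
    𝒜 g * 𝒜 h = 𝒜 g * 𝒜 (-g) * 𝒜 (g + h) := by
  refine le_antisymm ?_ ?_
  · calc 𝒜 g * 𝒜 h = 𝒜 g * 𝒜 (-g) * (𝒜 g * 𝒜 h) := by rw [← mul_assoc, h𝒜 g]
      _ ≤ 𝒜 g * 𝒜 (-g) * 𝒜 (g + h) := by gcongr; exact graded_mul_le 𝒜 g h
  · calc 𝒜 g * 𝒜 (-g) * 𝒜 (g + h) = 𝒜 g * (𝒜 (-g) * 𝒜 (g + h)) := mul_assoc _ _ _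
      _ ≤ 𝒜 g * 𝒜 (-g + (g + h)) := by gcongr; exact graded_mul_le 𝒜 _ _
      _ = 𝒜 g * 𝒜 h := by rw [neg_add_cancel_left]

theorem IsSymmetricallyGraded.mul_eq_right (h𝒜 : IsSymmetricallyGraded 𝒜) (g h : ι) :
    𝒜 g * 𝒜 h = 𝒜 (g + h) * (𝒜 (-h) * 𝒜 h) := by
  refine le_antisymm ?_ ?_
  · calc 𝒜 g * 𝒜 h = 𝒜 g * 𝒜 h * (𝒜 (-h) * 𝒜 h) := by rw [mul_assoc, ← mul_assoc (𝒜 h), h𝒜 h]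
      _ ≤ 𝒜 (g + h) * (𝒜 (-h) * 𝒜 h) := by gcongr; exact graded_mul_le 𝒜 g h
  · calc 𝒜 (g + h) * (𝒜 (-h) * 𝒜 h) = 𝒜 (g + h) * 𝒜 (-h) * 𝒜 h := (mul_assoc _ _ _).symm
      _ ≤ 𝒜 (g + h + -h) * 𝒜 h := by gcongr; exact graded_mul_le 𝒜 _ _
      _ = 𝒜 g * 𝒜 h := by rw [add_neg_cancel_right]

end Symmetric

/-- `S` is epsilon-strongly graded iff `S` is symmetrically graded
(`S_g S_{g⁻¹} S_g = S_g` for all `g`) and every `R`-ideal `S_g S_{g⁻¹}` is unital. -/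
theorem isEpsilonStronglyGraded_iff_symmetric_and_unital [DecidableEq ι]
    (𝒜 : ι → AddSubgroup S) [GradedRing 𝒜] :
    IsEpsilonStronglyGraded 𝒜 ↔
      ((∀ g : ι, (𝒜 g * 𝒜 (-g)) * 𝒜 g = 𝒜 g) ∧
        ∀ g : ι, IsUnitalIdealOfZero 𝒜 (𝒜 g * 𝒜 (-g))) :=
  ⟨fun h𝒜 => ⟨h𝒜.isSymmetricallyGraded, h𝒜.1⟩, fun ⟨hsymm, hunital⟩ =>
    ⟨hunital, fun g h => ⟨IsSymmetricallyGraded.mul_eq_left hsymm g h,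
      IsSymmetricallyGraded.mul_eq_right hsymm g h⟩⟩⟩
end

section
/- Let S be a ring graded by a group G with R = S_e. If for every g ∈ G there is ε_g ∈ S_g S_{g⁻¹} such that ε_g s = s = s ε_{g⁻¹} for all s ∈ S_g, then for every g ∈ G, S_g is finitely generated and projective as a left R-module. -/
/-!
Write `ε (-g) = ∑ i, u i * v i` with `u i ∈ S_{g⁻¹}` and `v i ∈ S_g`. For `s ∈ S_g` this gives
`s = s * ε (-g) = ∑ i, (s * u i) * v i` with `s * u i ∈ R`, so the `R`-linear maps `s ↦ s * u i`
and the elements `v i` form a finite dual basis of `S_g`: it is a direct summand of `R ^ n`.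
-/

open Pointwise

variable {S : Type*} [Ring S] {ι : Type*} [AddGroup ι]

def gradeZeroModule [DecidableEq ι] (𝒜 : ι → AddSubgroup S) [GradedRing 𝒜] (g : ι) :
    Module (𝒜 0) (𝒜 g) where
  smul r x := ⟨(r : S) * (x : S), by simpa using SetLike.mul_mem_graded r.2 x.2⟩
  one_smul x := Subtype.ext (one_mul (x : S))
  mul_smul r r' x := Subtype.ext (mul_assoc (r : S) (r' : S) (x : S))
  smul_zero r := Subtype.ext (mul_zero (r : S))
  smul_add r x y := Subtype.ext (mul_add (r : S) (x : S) (y : S))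
  add_smul r r' x := Subtype.ext (add_mul (r : S) (r' : S) (x : S))
  zero_smul x := Subtype.ext (zero_mul (x : S))

theorem AddSubmonoid.exists_fin_sum_mul_eq_of_mem_mul {R : Type*} [NonUnitalNonAssocSemiring R]
    {A B : AddSubmonoid R} {r : R} (hr : r ∈ A * B) :
    ∃ (n : ℕ) (u v : Fin n → R), (∀ i, u i ∈ A) ∧ (∀ i, v i ∈ B) ∧ ∑ i, u i * v i = r := by
  refine AddSubmonoid.mul_induction_on hr ?_ ?_
  · intro a ha b hb
    exact ⟨1, fun _ ↦ a, fun _ ↦ b, fun _ ↦ ha, fun _ ↦ hb, by simp⟩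
  · rintro _ _ ⟨m, u, v, hu, hv, rfl⟩ ⟨n, u', v', hu', hv', rfl⟩
    refine ⟨m + n, Fin.append u u', Fin.append v v', ?_, ?_, ?_⟩
    · simpa [Fin.forall_fin_add] using ⟨hu, hu'⟩
    · simpa [Fin.forall_fin_add] using ⟨hv, hv'⟩
    · simp [Fin.sum_univ_add]

theorem Module.finite_projective_of_sum_smul_eq {R M κ : Type*} [Semiring R] [AddCommMonoid M]
    [Module R M] [Fintype κ] (x : κ → M) (f : κ → M →ₗ[R] R) (h : ∀ m, ∑ i, f i m • x i = m) :
    Module.Finite R M ∧ Module.Projective R M := by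
  have hsplit : (Fintype.linearCombination R x).comp (LinearMap.pi f) = LinearMap.id :=
    LinearMap.ext fun m ↦ by simp [Fintype.linearCombination_apply, h]
  exact ⟨Module.Finite.of_surjective _ (LinearMap.surjective_of_comp_eq_id _ _ hsplit),
    Module.Projective.of_split _ _ hsplit⟩

section GradeZero

variable [DecidableEq ι] (𝒜 : ι → AddSubgroup S) [GradedRing 𝒜]

attribute [local instance] gradeZeroModule

def mulRightToGradeZero {g : ι} (u : 𝒜 (-g)) : 𝒜 g →ₗ[𝒜 0] 𝒜 0 where
  toFun s := ⟨s * u, by simpa using SetLike.mul_mem_graded s.2 u.2⟩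
  map_add' s t := Subtype.ext (add_mul (s : S) t u)
  map_smul' r s := Subtype.ext (mul_assoc (r : S) s u)

theorem gradeZero_finite_projective_of_mul_eq_self {g : ι} {e : S} (he : e ∈ 𝒜 (-g) * 𝒜 g)
    (hs : ∀ s ∈ 𝒜 g, s * e = s) :
    Module.Finite (𝒜 0) (𝒜 g) ∧ Module.Projective (𝒜 0) (𝒜 g) := by
  rw [← AddSubgroup.mem_toAddSubmonoid, AddSubgroup.mul_toAddSubmonoid] at he
  obtain ⟨n, u, v, hu, hv, rfl⟩ := AddSubmonoid.exists_fin_sum_mul_eq_of_mem_mul he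
  refine Module.finite_projective_of_sum_smul_eq (fun i ↦ ⟨v i, hv i⟩)
    (fun i ↦ mulRightToGradeZero 𝒜 ⟨u i, hu i⟩) fun s ↦ Subtype.ext ?_
  calc ((∑ i, mulRightToGradeZero 𝒜 ⟨u i, hu i⟩ s • ⟨v i, hv i⟩ : 𝒜 g) : S)
      = ∑ i, s * u i * v i := AddSubgroup.val_finsetSum _ _ _
    _ = s * ∑ i, u i * v i := by simp only [Finset.mul_sum, mul_assoc]
    _ = s := hs s s.2

end GradeZero

/-- If for every `g` there is `ε g ∈ S_g S_{g⁻¹}` with `ε g * s = s = s * ε (-g)` for all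
`s ∈ S_g`, then every `S_g` is a finitely generated projective left module over `R = S_e`. -/
theorem component_finite_projective [DecidableEq ι] (𝒜 : ι → AddSubgroup S) [GradedRing 𝒜]
    (ε : ι → S) (hmem : ∀ g : ι, ε g ∈ 𝒜 g * 𝒜 (-g))
    (hid : ∀ g : ι, ∀ s ∈ 𝒜 g, ε g * s = s ∧ s * ε (-g) = s) (g : ι) :
    letI := gradeZeroModule 𝒜 g
    Module.Finite (𝒜 0) (𝒜 g) ∧ Module.Projective (𝒜 0) (𝒜 g) :=
  gradeZero_finite_projective_of_mul_eq_self 𝒜 (by simpa using hmem (-g))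
    fun s hs ↦ (hid g s hs).2
end

section
/- Let S be a ring graded by a group G with R = S_e. If for every g ∈ G there is ε_g ∈ S_g S_{g⁻¹} with ε_g s = s = s ε_{g⁻¹} for all s ∈ S_g, then for every g ∈ G the map n_g : S_g → Hom_R(S_{g⁻¹}, R) defined by n_g(s)(t) = t s is an isomorphism of right R-modules. -/
/-! Write `ε_g = ∑ xᵢ yᵢ` with `xᵢ ∈ S_g`, `yᵢ ∈ S_{g⁻¹}`. If `t s = 0` for all `t ∈ S_{g⁻¹}`, then
`s = ε_g s = 0`, so `n_g` is injective. Given a left `R`-linear `f : S_{g⁻¹} → R`, the element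
`s = ∑ xᵢ f(yᵢ)` satisfies `t s = ∑ f(t xᵢ yᵢ) = f(t ε_g) = f(t)`, so `n_g` is surjective. -/

open Pointwise

variable {S : Type*} [Ring S] {ι : Type*} [AddGroup ι]

/-- The map `n_g : S_g → Hom_R(S_{g⁻¹}, R)`, `n_g(s)(t) = t * s`, where
`Hom_R` denotes left `R = S_e`-linear maps. -/
def ngHom [DecidableEq ι] (𝒜 : ι → AddSubgroup S) [GradedRing 𝒜] (g : ι) (s : 𝒜 g) :
    letI := gradeZeroModule 𝒜 (-g)
    (𝒜 (-g)) →ₗ[𝒜 0] (𝒜 0) :=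
  letI := gradeZeroModule 𝒜 (-g)
  { toFun := fun t => ⟨(t : S) * (s : S), by simpa using SetLike.mul_mem_graded t.2 s.2⟩
    map_add' := fun t t' => Subtype.ext (add_mul (t : S) (t' : S) (s : S))
    map_smul' := fun r t => Subtype.ext (mul_assoc (r : S) (t : S) (s : S)) }

theorem AddSubgroup.mul_mul_eq_zero_of_mem_mul {R : Type*} [NonUnitalRing R] {M N : AddSubgroup R}
    {e s : R} (he : e ∈ M * N) (h : ∀ n ∈ N, n * s = 0) : e * s = 0 :=
  AddSubmonoid.mul_induction_on he (fun _ _ n hn => by rw [mul_assoc, h n hn, mul_zero])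
    fun a b ha hb => by rw [add_mul, ha, hb, add_zero]

section

variable [DecidableEq ι] (𝒜 : ι → AddSubgroup S) [GradedRing 𝒜] {g : ι}

attribute [local instance] gradeZeroModule

theorem coe_ngHom_apply (s : 𝒜 g) (t : 𝒜 (-g)) :
    ((ngHom 𝒜 g s t : 𝒜 0) : S) = (t : S) * (s : S) :=
  rfl

theorem ngHom_add (s s' : 𝒜 g) : ngHom 𝒜 g (s + s') = ngHom 𝒜 g s + ngHom 𝒜 g s' :=
  LinearMap.ext fun t => Subtype.ext (mul_add (t : S) s s')

theorem ngHom_injective {e : S} (he : e ∈ 𝒜 g * 𝒜 (-g)) (hid : ∀ s ∈ 𝒜 g, e * s = s) :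
    Function.Injective (ngHom 𝒜 g) := by
  intro a b hab
  have hann : ∀ t ∈ 𝒜 (-g), t * ((a : S) - b) = 0 := fun t ht => by
    rw [mul_sub, sub_eq_zero]
    exact congrArg Subtype.val (LinearMap.congr_fun hab ⟨t, ht⟩)
  have h := AddSubgroup.mul_mul_eq_zero_of_mem_mul he hann
  rw [hid _ (sub_mem a.2 b.2), sub_eq_zero] at h
  exact Subtype.ext h

/- Projecting onto degree `-g` makes the right-hand side additive in `e`, which allows an
induction over `e ∈ S_g S_{g⁻¹}`. -/
theorem exists_mul_eq_apply_decompose_mul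
    (f : 𝒜 (-g) →ₗ[𝒜 0] 𝒜 0) {e : S} (he : e ∈ 𝒜 g * 𝒜 (-g)) :
    ∃ s : 𝒜 g, ∀ t : 𝒜 (-g), (t : S) * s = f (DirectSum.decompose 𝒜 (t * e) (-g)) := by
  refine AddSubmonoid.mul_induction_on he ?_ ?_
  · intro x (hx : x ∈ 𝒜 g) y (hy : y ∈ 𝒜 (-g))
    refine ⟨⟨x * f ⟨y, hy⟩, by simpa using SetLike.mul_mem_graded hx (f ⟨y, hy⟩).2⟩, fun t => ?_⟩
    have htx : (t : S) * x ∈ 𝒜 0 := by simpa using SetLike.mul_mem_graded t.2 hx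
    have hsmul : (t : S) * (x * y) = ((⟨_, htx⟩ : 𝒜 0) • ⟨y, hy⟩ : 𝒜 (-g)) :=
      (mul_assoc _ _ _).symm
    rw [hsmul, DirectSum.decompose_coe, DirectSum.of_eq_same, map_smul]
    exact (mul_assoc _ _ _).symm
  · rintro a b ⟨sa, hsa⟩ ⟨sb, hsb⟩
    refine ⟨sa + sb, fun t => ?_⟩
    rw [AddMemClass.coe_add, mul_add, mul_add, DirectSum.decompose_add, DirectSum.add_apply,
      map_add, AddMemClass.coe_add, hsa, hsb]

theorem ngHom_surjective {e : S} (he : e ∈ 𝒜 g * 𝒜 (-g)) (hid : ∀ t ∈ 𝒜 (-g), t * e = t) :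
    Function.Surjective (ngHom 𝒜 g) := by
  intro f
  obtain ⟨s, hs⟩ := exists_mul_eq_apply_decompose_mul 𝒜 f he
  refine ⟨s, LinearMap.ext fun t => Subtype.ext ?_⟩
  rw [coe_ngHom_apply, hs, hid t t.2, DirectSum.decompose_coe, DirectSum.of_eq_same]

end

/-- If for every `g` there is `ε g ∈ S_g S_{g⁻¹}` with `ε g * s = s = s * ε (-g)` for all
`s ∈ S_g`, then `n_g` is an isomorphism of right `R`-modules: it is additive, bijective
onto the left `R`-linear maps `S_{g⁻¹} → R`, is given by `n_g(s)(t) = t * s`, and is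
compatible with the right `R`-actions. -/
theorem ngHom_bijective [DecidableEq ι] (𝒜 : ι → AddSubgroup S) [GradedRing 𝒜]
    (ε : ι → S) (hmem : ∀ g : ι, ε g ∈ 𝒜 g * 𝒜 (-g))
    (hid : ∀ g : ι, ∀ s ∈ 𝒜 g, ε g * s = s ∧ s * ε (-g) = s) (g : ι) :
    Function.Bijective (ngHom 𝒜 g) ∧
      (∀ (s : 𝒜 g) (t : 𝒜 (-g)), ((ngHom 𝒜 g s t : 𝒜 0) : S) = (t : S) * (s : S)) ∧
      (∀ s s' : 𝒜 g, ngHom 𝒜 g (s + s') = ngHom 𝒜 g s + ngHom 𝒜 g s') ∧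
      (∀ (s : 𝒜 g) (r : 𝒜 0) (s' : 𝒜 g), (s' : S) = (s : S) * (r : S) →
        ∀ t : 𝒜 (-g), ((ngHom 𝒜 g s' t : 𝒜 0) : S) = ((ngHom 𝒜 g s t : 𝒜 0) : S) * (r : S)) := by
  refine ⟨⟨ngHom_injective 𝒜 (hmem g) fun s hs => (hid g s hs).1,
    ngHom_surjective 𝒜 (hmem g) fun t ht => by simpa using (hid (-g) t ht).2⟩,
    coe_ngHom_apply 𝒜, ngHom_add 𝒜, fun s r s' hs' t => ?_⟩
  rw [coe_ngHom_apply, coe_ngHom_apply, hs', mul_assoc]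
end

section
/- Let S be epsilon-strongly graded by a group G with R = S_e. For g ∈ G choose u_g^{(i)} ∈ S_g, v_{g⁻¹}^{(i)} ∈ S_{g⁻¹} with Σ_i u_g^{(i)} v_{g⁻¹}^{(i)} = ε_g, and define γ_g(s) = Σ_i u_g^{(i)} s v_{g⁻¹}^{(i)}. Then for any r ∈ Z(R), the value γ_g(r) does not depend on the choice of the elements u_g^{(i)}, v_{g⁻¹}^{(i)}: if also Σ_j s_g^{(j)} t_{g⁻¹}^{(j)} = ε_g with s_g^{(j)} ∈ S_g, t_{g⁻¹}^{(j)} ∈ S_{g⁻¹}, then Σ_i u_g^{(i)} r v_{g⁻¹}^{(i)} = Σ_j s_g^{(j)} r t_{g⁻¹}^{(j)}. -/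
open Pointwise

variable {S : Type*} [Ring S] {ι : Type*} [AddGroup ι]

-- Insert `e = ∑ⱼ sⱼ tⱼ` after each `vᵢ`; then `r` commutes past `vᵢ sⱼ` and `∑ᵢ uᵢ vᵢ = e` is absorbed by `sⱼ`.
theorem sum_mul_mul_eq_of_commute {R : Type*} [Semiring R] {α β : Type*} [Fintype α] [Fintype β]
    {u v : α → R} {s t : β → R} {e r : R}
    (huv : ∑ i, u i * v i = e) (hst : ∑ j, s j * t j = e)
    (hv : ∀ i, v i * e = v i) (hs : ∀ j, e * s j = s j)
    (hr : ∀ i j, Commute r (v i * s j)) :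
    ∑ i, u i * r * v i = ∑ j, s j * r * t j := by
  have hswap : ∀ i j, u i * r * (v i * (s j * t j)) = u i * v i * (s j * r * t j) := by
    intro i j
    calc u i * r * (v i * (s j * t j)) = u i * (r * (v i * s j)) * t j := by
          simp only [mul_assoc]
      _ = u i * v i * (s j * r * t j) := by
          rw [(hr i j).eq]; simp only [mul_assoc]
  calc ∑ i, u i * r * v i = ∑ i, u i * r * (v i * e) := by simp_rw [hv]
    _ = ∑ i, ∑ j, u i * r * (v i * (s j * t j)) := by simp_rw [← hst, Finset.mul_sum]
    _ = ∑ j, ∑ i, u i * v i * (s j * r * t j) := by rw [Finset.sum_comm]; simp_rw [hswap]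
    _ = ∑ j, e * (s j * r * t j) := by simp_rw [← Finset.sum_mul, huv]
    _ = ∑ j, s j * r * t j := by simp_rw [← mul_assoc, hs]

theorem IsEpsilonStronglyGraded.mul_mem_zero {𝒜 : ι → AddSubgroup S}
    (h : IsEpsilonStronglyGraded 𝒜) {g : ι} {x y : S} (hx : x ∈ 𝒜 (-g)) (hy : y ∈ 𝒜 g) :
    x * y ∈ 𝒜 0 :=
  (h.1 (-g)).1 <| by
    rw [neg_neg, ← AddSubgroup.mem_toAddSubmonoid, AddSubgroup.mul_toAddSubmonoid]
    exact AddSubmonoid.mul_mem_mul hx hy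

theorem gamma_well_defined_general (𝒜 : ι → AddSubgroup S)
    (h : IsEpsilonStronglyGraded 𝒜) (ε : ι → S)
    (hid : ∀ g : ι, ∀ s ∈ 𝒜 g, ε g * s = s ∧ s * ε (-g) = s)
    (g : ι) (r : S) (hrc : ∀ x ∈ 𝒜 0, r * x = x * r)
    {n m : ℕ} (u : Fin n → S) (v : Fin n → S) (s : Fin m → S) (t : Fin m → S)
    (hv : ∀ i, v i ∈ 𝒜 (-g))
    (hs : ∀ j, s j ∈ 𝒜 g)
    (huv : ∑ i, u i * v i = ε g) (hst : ∑ j, s j * t j = ε g) :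
    ∑ i, u i * r * v i = ∑ j, s j * r * t j :=
  sum_mul_mul_eq_of_commute huv hst
    (fun i => by simpa only [neg_neg] using (hid (-g) (v i) (hv i)).2)
    (fun j => (hid g (s j) (hs j)).1)
    (fun i j => hrc _ (h.mul_mem_zero (hv i) (hs j)))

/-- For `r` in the center of `R = S_e`, the value `γ_g(r) = Σᵢ uᵢ r vᵢ` does not depend on
the chosen decomposition `ε g = Σᵢ uᵢ vᵢ` with `uᵢ ∈ S_g`, `vᵢ ∈ S_{g⁻¹}`. -/
theorem gamma_well_defined [DecidableEq ι] (𝒜 : ι → AddSubgroup S) [GradedRing 𝒜]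
    (h : IsEpsilonStronglyGraded 𝒜) (ε : ι → S)
    (hmem : ∀ g : ι, ε g ∈ 𝒜 g * 𝒜 (-g))
    (hid : ∀ g : ι, ∀ s ∈ 𝒜 g, ε g * s = s ∧ s * ε (-g) = s)
    (g : ι) (r : S) (hr : r ∈ 𝒜 0) (hrc : ∀ x ∈ 𝒜 0, r * x = x * r)
    {n m : ℕ} (u : Fin n → S) (v : Fin n → S) (s : Fin m → S) (t : Fin m → S)
    (hu : ∀ i, u i ∈ 𝒜 g) (hv : ∀ i, v i ∈ 𝒜 (-g))
    (hs : ∀ j, s j ∈ 𝒜 g) (ht : ∀ j, t j ∈ 𝒜 (-g))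
    (huv : ∑ i, u i * v i = ε g) (hst : ∑ j, s j * t j = ε g) :
    ∑ i, u i * r * v i = ∑ j, s j * r * t j :=
  gamma_well_defined_general 𝒜 h ε hid g r hrc u v s t hv hs huv hst
end

section
/- Let S be epsilon-strongly graded by a group G with R = S_e, and define γ_g on S by γ_g(s) = Σ_i u_g^{(i)} s v_{g⁻¹}^{(i)} where Σ_i u_g^{(i)} v_{g⁻¹}^{(i)} = ε_g with u_g^{(i)} ∈ S_g, v_{g⁻¹}^{(i)} ∈ S_{g⁻¹}. Then for all g, h ∈ G and r ∈ Z(R), γ_g(γ_h(r)) = γ_{gh}(r) ε_g. -/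
open Pointwise

variable {S : Type*} [Ring S] {ι : Type*} [AddGroup ι]

/-! Write `Γ = γ_{gh}(r)`. For homogeneous `a ∈ S_m` absorbed by `ε_m`, centrality of `r` in `R`
gives `a r = γ_m(r) a`, since each `v_m^{(k)} a` lies in `R`. Applying this to `a = u_g^{(j)} u_h^{(i)}`
turns `γ_g(γ_h(r))` into `Γ · Σ_j u_g^{(j)} ε_h v_{g⁻¹}^{(j)}`, and `ε_h` is absorbed on the left by
`Γ u_g^{(j)}`, whose terms end in `v_{(gh)⁻¹}^{(k)} u_g^{(j)} ∈ S_{h⁻¹}`. -/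

def gammaMap {R : Type*} [NonUnitalSemiring R] {n : ℕ} (u v : Fin n → R) (s : R) : R :=
  ∑ k, u k * s * v k

theorem gammaMap_gammaMap {R : Type*} [NonUnitalSemiring R] {m n : ℕ} (u v : Fin m → R)
    (u' v' : Fin n → R) (s : R) :
    gammaMap u v (gammaMap u' v' s) = ∑ j, ∑ i, u j * u' i * s * (v' i * v j) := by
  simp only [gammaMap, Finset.mul_sum, Finset.sum_mul, mul_assoc]

section Graded

variable (𝒜 : ι → AddSubgroup S) [SetLike.GradedMul 𝒜]

theorem mul_eq_gammaMap_mul {m : ι} {n : ℕ} (u v : Fin n → S) (hv : ∀ k, v k ∈ 𝒜 (-m))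
    {r : S} (hrc : ∀ x ∈ 𝒜 0, r * x = x * r) {a : S} (ha : a ∈ 𝒜 m)
    (hεa : (∑ k, u k * v k) * a = a) :
    a * r = gammaMap u v r * a := by
  have hva : ∀ k, v k * a ∈ 𝒜 0 := fun k => by
    simpa only [neg_add_cancel] using SetLike.mul_mem_graded (hv k) ha
  calc a * r = (∑ k, u k * v k) * a * r := by rw [hεa]
    _ = ∑ k, u k * (v k * a * r) := by simp only [Finset.sum_mul, mul_assoc]
    _ = ∑ k, u k * (r * (v k * a)) := by simp only [hrc _ (hva _)]
    _ = gammaMap u v r * a := by simp only [gammaMap, Finset.sum_mul, mul_assoc]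

theorem gammaMap_mul_mul_of_mul_eq {g h : ι} {e : S}
    (he : ∀ s ∈ 𝒜 (-h), s * e = s) {n : ℕ} (u v : Fin n → S)
    (hv : ∀ k, v k ∈ 𝒜 (-(g + h))) (s : S) {a : S} (ha : a ∈ 𝒜 g) :
    gammaMap u v s * a * e = gammaMap u v s * a := by
  have hva : ∀ k, v k * a ∈ 𝒜 (-h) := fun k => by
    simpa only [neg_add_rev, add_assoc, neg_add_cancel, add_zero] using
      SetLike.mul_mem_graded (hv k) ha
  simp only [gammaMap, Finset.sum_mul, mul_assoc, he _ (hva _)]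

end Graded

theorem gamma_comp_general [DecidableEq ι] (𝒜 : ι → AddSubgroup S) [GradedRing 𝒜]
    (ε : ι → S)
    (hid : ∀ g : ι, ∀ s ∈ 𝒜 g, ε g * s = s ∧ s * ε (-g) = s)
    (g h' : ι) (r : S) (hrc : ∀ x ∈ 𝒜 0, r * x = x * r)
    {ng nh ngh : ℕ}
    (ug : Fin ng → S) (vg : Fin ng → S) (uh : Fin nh → S) (vh : Fin nh → S)
    (ugh : Fin ngh → S) (vgh : Fin ngh → S)
    (hug : ∀ i, ug i ∈ 𝒜 g)
    (huh : ∀ i, uh i ∈ 𝒜 h')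
    (hvgh : ∀ i, vgh i ∈ 𝒜 (-(g + h')))
    (hg : ∑ i, ug i * vg i = ε g) (hh : ∑ i, uh i * vh i = ε h')
    (hgh : ∑ i, ugh i * vgh i = ε (g + h')) :
    ∑ j, ug j * (∑ i, uh i * r * vh i) * vg j =
      (∑ k, ugh k * r * vgh k) * ε g := by
  set Γ := gammaMap ugh vgh r
  have hswap : ∀ j i, ug j * uh i * r = Γ * (ug j * uh i) := fun j i => by
    have ha := SetLike.mul_mem_graded (hug j) (huh i)
    exact mul_eq_gammaMap_mul 𝒜 ugh vgh hvgh hrc ha (hgh ▸ (hid _ _ ha).1)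
  have hεh : ∀ s ∈ 𝒜 (-h'), s * ε h' = s := fun s hs => by
    simpa only [neg_neg] using (hid _ s hs).2
  have habs : ∀ j, Γ * ug j * ε h' = Γ * ug j := fun j =>
    gammaMap_mul_mul_of_mul_eq 𝒜 hεh ugh vgh hvgh r (hug j)
  calc gammaMap ug vg (gammaMap uh vh r)
      = ∑ j, ∑ i, Γ * (ug j * uh i) * (vh i * vg j) := by
        simp only [gammaMap_gammaMap, hswap]
    _ = ∑ j, Γ * ug j * ε h' * vg j := by
        simp only [← hh, Finset.mul_sum, Finset.sum_mul, mul_assoc]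
    _ = ∑ j, Γ * ug j * vg j := by simp only [habs]
    _ = Γ * ε g := by simp only [← hg, Finset.mul_sum, mul_assoc]

/-- For `r` in the center of `R = S_e` one has `γ_g(γ_h(r)) = γ_{gh}(r) ε_g`. -/
theorem gamma_comp [DecidableEq ι] (𝒜 : ι → AddSubgroup S) [GradedRing 𝒜]
    (h : IsEpsilonStronglyGraded 𝒜) (ε : ι → S)
    (hmem : ∀ g : ι, ε g ∈ 𝒜 g * 𝒜 (-g))
    (hid : ∀ g : ι, ∀ s ∈ 𝒜 g, ε g * s = s ∧ s * ε (-g) = s)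
    (g h' : ι) (r : S) (hr : r ∈ 𝒜 0) (hrc : ∀ x ∈ 𝒜 0, r * x = x * r)
    {ng nh ngh : ℕ}
    (ug : Fin ng → S) (vg : Fin ng → S) (uh : Fin nh → S) (vh : Fin nh → S)
    (ugh : Fin ngh → S) (vgh : Fin ngh → S)
    (hug : ∀ i, ug i ∈ 𝒜 g) (hvg : ∀ i, vg i ∈ 𝒜 (-g))
    (huh : ∀ i, uh i ∈ 𝒜 h') (hvh : ∀ i, vh i ∈ 𝒜 (-h'))
    (hugh : ∀ i, ugh i ∈ 𝒜 (g + h')) (hvgh : ∀ i, vgh i ∈ 𝒜 (-(g + h')))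
    (hg : ∑ i, ug i * vg i = ε g) (hh : ∑ i, uh i * vh i = ε h')
    (hgh : ∑ i, ugh i * vgh i = ε (g + h')) :
    ∑ j, ug j * (∑ i, uh i * r * vh i) * vg j =
      (∑ k, ugh k * r * vgh k) * ε g :=
  gamma_comp_general 𝒜 ε hid g h' r hrc ug vg uh vh ugh vgh hug huh hvgh hg hh hgh
end

section
/- Let S be epsilon-strongly graded by a group G with R = S_e. If there exists c ∈ Z(R) with c ε_g = 0 for all but finitely many g ∈ G and Σ_{g∈G} γ_g(c) = 1, then the ring extension S/R is separable, i.e. the multiplication map S ⊗_R S → S admits a separability element x with m(x) = 1 and s x = x s for all s ∈ S. -/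
open Pointwise

variable {S : Type*} [Ring S] {ι : Type*} [AddGroup ι]

universe u

/-- `(a, b)` encodes a separability element `Σᵢ aᵢ ⊗ bᵢ ∈ S ⊗_R S` for the extension `S/R`:
`Σᵢ aᵢ bᵢ = 1` and `s • x = x • s` for all `s ∈ S`, the tensor equality being expressed via
all `R`-balanced biadditive maps into abelian groups. -/
def IsSepElt {S : Type*} [Ring S] (R : AddSubgroup S) {n : ℕ} (a b : Fin n → S) : Prop :=
  (∑ i, a i * b i) = 1 ∧
    ∀ (M : Type u) [AddCommGroup M] (φ : S → S → M),
      (∀ x x' y : S, φ (x + x') y = φ x y + φ x' y) →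
      (∀ x y y' : S, φ x (y + y') = φ x y + φ x y') →
      (∀ r ∈ R, ∀ x y : S, φ (x * r) y = φ x (r * y)) →
      ∀ s : S, (∑ i, φ (s * a i) (b i)) = ∑ i, φ (a i) (b i * s)

/-- The ring extension `S/R` is separable: there exists a separability element. -/
def IsSepExt {S : Type*} [Ring S] (R : AddSubgroup S) : Prop :=
  ∃ (n : ℕ) (a b : Fin n → S), IsSepElt.{u} R a b


open Finset

/-!
Take `x = ∑ₖ ∑ⱼ u k j c ⊗ v k j`, summed over the finitely many degrees `k` with
`c ε (-k) ≠ 0` (for the others `u k j c = 0`), so that `m x = ∑ₖ γₖ c = 1`. For `s` homogeneous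
of degree `d`, writing `s u g i = ε (d + g) s u g i = ∑ⱼ u (d + g) j (v (d + g) j s u g i)` and
moving the degree-zero factor `v (d + g) j s u g i` past `c` and across the tensor sign turns the
`g`-th summand of `s x` into the `(d + g)`-th summand of `x s`; reindexing by `g ↦ d + g` gives
`s x = x s`.
-/

def IsBalanced (R : AddSubgroup S) {M : Type*} [AddCommGroup M] (B : S →+ S →+ M) : Prop :=
  ∀ r ∈ R, ∀ x y : S, B (x * r) y = B x (r * y)

theorem isSepExt_of_finset {R : AddSubgroup S} {α : Type*} (T : Finset α) (a b : α → S)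
    (hone : ∑ i ∈ T, a i * b i = 1)
    (hcomm : ∀ (M : Type u) [AddCommGroup M] (B : S →+ S →+ M),
      IsBalanced R B →
      ∀ s : S, ∑ i ∈ T, B (s * a i) (b i) = ∑ i ∈ T, B (a i) (b i * s)) :
    IsSepExt.{u} R := by
  let e := T.equivFin
  refine ⟨#T, fun n => a (e.symm n), fun n => b (e.symm n), ?_, ?_⟩
  · rw [e.symm.sum_comp (fun i : T => a i * b i), T.sum_coe_sort (fun i => a i * b i), hone]
  · intro M _ φ hl hr hbal s
    let B : S →+ S →+ M :=
      AddMonoidHom.mk' (fun x => AddMonoidHom.mk' (φ x) (hr x)) fun x x' =>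
        AddMonoidHom.ext (hl x x')
    rw [e.symm.sum_comp (fun i : T => φ (s * a i) (b i)),
      e.symm.sum_comp (fun i : T => φ (a i) (b i * s)),
      T.sum_coe_sort (fun i => φ (s * a i) (b i)), T.sum_coe_sort (fun i => φ (a i) (b i * s))]
    exact hcomm M B hbal s

structure EpsilonDecomposition (𝒜 : ι → AddSubgroup S) where
  ε : ι → S
  N : ι → ℕ
  u : (g : ι) → Fin (N g) → S
  v : (g : ι) → Fin (N g) → S
  u_mem : ∀ g i, u g i ∈ 𝒜 g
  v_mem : ∀ g i, v g i ∈ 𝒜 (-g)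
  sum_u_mul_v : ∀ g, ∑ i, u g i * v g i = ε g
  ε_mul : ∀ g, ∀ s ∈ 𝒜 g, ε g * s = s
  mul_ε : ∀ g, ∀ s ∈ 𝒜 g, s * ε (-g) = s

namespace EpsilonDecomposition

variable {𝒜 : ι → AddSubgroup S} [SetLike.GradedMonoid 𝒜] (E : EpsilonDecomposition 𝒜)
  {c : S} {M : Type*} [AddCommGroup M] {B : S →+ S →+ M}

def γ (g : ι) (r : S) : S := ∑ i, E.u g i * r * E.v g i

theorem ε_mem_zero (g : ι) : E.ε g ∈ 𝒜 0 := by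
  rw [← E.sum_u_mul_v g]
  exact sum_mem fun i _ => by simpa using SetLike.mul_mem_graded (E.u_mem g i) (E.v_mem g i)

theorem u_mul_eq_zero (hcc : ∀ x ∈ 𝒜 0, c * x = x * c) {g : ι} (hg : c * E.ε (-g) = 0)
    (i : Fin (E.N g)) : E.u g i * c = 0 := by
  rw [← E.mul_ε g _ (E.u_mem g i), mul_assoc, ← hcc _ (E.ε_mem_zero _), hg, mul_zero]

theorem sum_balanced_mul_left_eq (hB : IsBalanced (𝒜 0) B) (hcc : ∀ x ∈ 𝒜 0, c * x = x * c)
    {d : ι} {s : S} (hs : s ∈ 𝒜 d) (g : ι) :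
    ∑ i, B (s * (E.u g i * c)) (E.v g i) = ∑ j, B (E.u (d + g) j * c) (E.v (d + g) j * s) := by
  have hsu : ∀ i, s * E.u g i ∈ 𝒜 (d + g) := fun i => SetLike.mul_mem_graded hs (E.u_mem g i)
  have hvsu : ∀ j i, E.v (d + g) j * (s * E.u g i) ∈ 𝒜 0 := fun j i => by
    simpa using SetLike.mul_mem_graded (E.v_mem _ j) (hsu i)
  have hvs : ∀ j, E.v (d + g) j * s ∈ 𝒜 (-g) := fun j => by
    simpa [add_assoc] using SetLike.mul_mem_graded (E.v_mem _ j) hs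
  have hexp : ∀ i,
      s * (E.u g i * c) = ∑ j, E.u (d + g) j * c * (E.v (d + g) j * (s * E.u g i)) := by
    intro i
    calc s * (E.u g i * c) = E.ε (d + g) * (s * E.u g i) * c := by
          rw [E.ε_mul _ _ (hsu i), mul_assoc]
      _ = _ := by
          rw [← E.sum_u_mul_v, sum_mul, sum_mul]
          refine sum_congr rfl fun j _ => ?_
          rw [mul_assoc (E.u _ j), mul_assoc (E.u _ j), mul_assoc (E.u _ j), hcc _ (hvsu j i)]
  calc ∑ i, B (s * (E.u g i * c)) (E.v g i)
      = ∑ i, ∑ j, B (E.u (d + g) j * c) (E.v (d + g) j * (s * E.u g i) * E.v g i) := by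
        refine sum_congr rfl fun i _ => ?_
        rw [hexp, map_sum, AddMonoidHom.finsetSum_apply]
        exact sum_congr rfl fun j _ => hB _ (hvsu j i) _ _
    _ = ∑ j, B (E.u (d + g) j * c) (E.v (d + g) j * s * E.ε g) := by
        rw [sum_comm]
        simp only [← E.sum_u_mul_v, mul_sum, map_sum, mul_assoc]
    _ = ∑ j, B (E.u (d + g) j * c) (E.v (d + g) j * s) := by
        refine sum_congr rfl fun j _ => congrArg (B _) ?_
        simpa using E.mul_ε _ _ (hvs j)

theorem finsum_balanced_mul_left_eq (hB : IsBalanced (𝒜 0) B) (hcc : ∀ x ∈ 𝒜 0, c * x = x * c)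
    {d : ι} {s : S} (hs : s ∈ 𝒜 d) :
    ∑ᶠ g, ∑ i, B (s * (E.u g i * c)) (E.v g i) = ∑ᶠ k, ∑ j, B (E.u k j * c) (E.v k j * s) := by
  simp_rw [E.sum_balanced_mul_left_eq hB hcc hs]
  exact finsum_comp_equiv (Equiv.addLeft d) (f := fun k => ∑ j, B (E.u k j * c) (E.v k j * s))

variable {F : Finset ι}

theorem sum_sum_eq_finsum_γ (hcc : ∀ x ∈ 𝒜 0, c * x = x * c)
    (hF : ∀ g ∉ F, c * E.ε (-g) = 0) :
    ∑ k ∈ F, ∑ j, E.u k j * c * E.v k j = ∑ᶠ g, E.γ g c :=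
  (finsum_eq_sum_of_support_subset _ <| Function.support_subset_iff'.2 fun k hk => by
    simp [E.u_mul_eq_zero hcc (hF k hk)]).symm

theorem sum_balanced_mul_comm [DecidableEq ι] [DirectSum.Decomposition 𝒜]
    (hB : IsBalanced (𝒜 0) B) (hcc : ∀ x ∈ 𝒜 0, c * x = x * c)
    (hF : ∀ g ∉ F, c * E.ε (-g) = 0) (s : S) :
    ∑ k ∈ F, ∑ j, B (s * (E.u k j * c)) (E.v k j) =
      ∑ k ∈ F, ∑ j, B (E.u k j * c) (E.v k j * s) := by
  induction s using DirectSum.Decomposition.inductionOn 𝒜 with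
  | zero => simp
  | homogeneous s =>
    have hsupp {f : ι → M} (hf : ∀ k, (∀ j, E.u k j * c = 0) → f k = 0) :
        Function.support f ⊆ F :=
      Function.support_subset_iff'.2 fun k hk => hf k (E.u_mul_eq_zero hcc (hF k hk))
    rw [← finsum_eq_sum_of_support_subset _ (hsupp fun k hk => by simp [hk]),
      ← finsum_eq_sum_of_support_subset _ (hsupp fun k hk => by simp [hk]),
      E.finsum_balanced_mul_left_eq hB hcc s.2]
  | add x y hx hy =>
    simp only [add_mul, mul_add, map_add, AddMonoidHom.add_apply, sum_add_distrib, hx, hy]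

end EpsilonDecomposition

theorem separable_of_trace_one_general [DecidableEq ι] (𝒜 : ι → AddSubgroup S) [GradedRing 𝒜]
    (ε : ι → S)
    (hid : ∀ g : ι, ∀ s ∈ 𝒜 g, ε g * s = s ∧ s * ε (-g) = s)
    (γ : ι → S → S)
    (hγ : ∀ g : ι, ∃ (n : ℕ) (u v : Fin n → S), (∀ i, u i ∈ 𝒜 g) ∧ (∀ i, v i ∈ 𝒜 (-g)) ∧
      (∑ i, u i * v i = ε g) ∧ ∀ s : S, γ g s = ∑ i, u i * s * v i)
    (c : S) (hcc : ∀ x ∈ 𝒜 0, c * x = x * c)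
    (hfin : {g : ι | c * ε g ≠ 0}.Finite)
    (htr : ∑ᶠ g : ι, γ g c = 1) :
    IsSepExt.{u} (𝒜 0) := by
  choose N u v hu hv huv hγ using hγ
  let E : EpsilonDecomposition 𝒜 :=
    ⟨ε, N, u, v, hu, hv, huv, fun g s hs => (hid g s hs).1, fun g s hs => (hid g s hs).2⟩
  have hγE : γ = E.γ := funext₂ hγ
  let F := (hfin.preimage neg_injective.injOn).toFinset
  have hF : ∀ g ∉ F, c * ε (-g) = 0 := by simp [F]
  refine isSepExt_of_finset (F.sigma fun _ => univ) (fun x : Σ k, Fin (N k) => u x.1 x.2 * c)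
    (fun x => v x.1 x.2) ?_ fun M _ B hB s => ?_
  · rw [sum_sigma, E.sum_sum_eq_finsum_γ hcc hF, ← hγE, htr]
  · simp only [sum_sigma]
    exact E.sum_balanced_mul_comm hB hcc hF s

/-- If there is `c ∈ Z(R)` with `c ε_g = 0` for all but finitely many `g` and
`Σ_g γ_g(c) = 1`, then the extension `S/R` is separable. -/
theorem separable_of_trace_one [DecidableEq ι] (𝒜 : ι → AddSubgroup S) [GradedRing 𝒜]
    (h : IsEpsilonStronglyGraded 𝒜) (ε : ι → S)
    (hmem : ∀ g : ι, ε g ∈ 𝒜 g * 𝒜 (-g))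
    (hid : ∀ g : ι, ∀ s ∈ 𝒜 g, ε g * s = s ∧ s * ε (-g) = s)
    (γ : ι → S → S)
    (hγ : ∀ g : ι, ∃ (n : ℕ) (u v : Fin n → S), (∀ i, u i ∈ 𝒜 g) ∧ (∀ i, v i ∈ 𝒜 (-g)) ∧
      (∑ i, u i * v i = ε g) ∧ ∀ s : S, γ g s = ∑ i, u i * s * v i)
    (c : S) (hc : c ∈ 𝒜 0) (hcc : ∀ x ∈ 𝒜 0, c * x = x * c)
    (hfin : {g : ι | c * ε g ≠ 0}.Finite)
    (htr : ∑ᶠ g : ι, γ g c = 1) :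
    IsSepExt.{u} (𝒜 0) :=
  separable_of_trace_one_general 𝒜 ε hid γ hγ c hcc hfin htr
end

section
/- Let S be epsilon-strongly graded by a group G with R = S_e. If the ring extension S/R is separable, then there exists c ∈ Z(R) with c ε_g = 0 for all but finitely many g ∈ G and Σ_{g∈G} γ_g(c) = 1. -/
/-!
Write the separability element as `Σᵢ aᵢ ⊗ bᵢ` and put `c = Σᵢ (aᵢ)_e (bᵢ)_e`. The maps
`(x, y) ↦ x_g y_k` taking homogeneous components are `R`-balanced, so they may be applied to the
identity `s x = x s`; this gives `c w = w Σᵢ (aᵢ)_{g⁻¹} (bᵢ)_g` for `w ∈ S_g`. Hence `c` is central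
in `R`, `γ_g(c) = ε_g Σᵢ (aᵢ)_g (bᵢ)_{g⁻¹} = Σᵢ (aᵢ)_g (bᵢ)_{g⁻¹}`, and these elements vanish for
almost all `g` and add up to the `e`-component of `Σᵢ aᵢ bᵢ = 1`.
-/

open Pointwise

variable {S : Type*} [Ring S] {ι : Type*} [AddGroup ι]

universe u

open GradedRing

theorem IsSepElt.sum_mul_left_eq_sum_mul_right {R : AddSubgroup S} {n : ℕ} {a b : Fin n → S}
    (hab : IsSepElt.{u} R a b) {M : Type*} [AddCommGroup M] (ψ : S → S → M)
    (hψ_add_left : ∀ x x' y : S, ψ (x + x') y = ψ x y + ψ x' y)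
    (hψ_add_right : ∀ x y y' : S, ψ x (y + y') = ψ x y + ψ x y')
    (hψ_balanced : ∀ r ∈ R, ∀ x y : S, ψ (x * r) y = ψ x (r * y)) (s : S) :
    ∑ i, ψ (s * a i) (b i) = ∑ i, ψ (a i) (b i * s) := by
  -- Characters of `M` separate points, and composed with `ψ` they land in `Type u`.
  by_contra hne
  obtain ⟨χ, hχ⟩ := CharacterModule.exists_character_apply_ne_zero_of_ne_zero (sub_ne_zero.2 hne)
  set e : M →+ ULift.{u} (AddCircle (1 : ℚ)) := AddEquiv.ulift.symm.toAddMonoidHom.comp χ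
  have key := hab.2 _ (fun x y => e (ψ x y))
    (fun x x' y => by simp only [hψ_add_left, map_add])
    (fun x y y' => by simp only [hψ_add_right, map_add])
    (fun r hr x y => by rw [hψ_balanced r hr]) s
  simp only [← map_sum, e] at key
  exact hχ (by rw [map_sub, sub_eq_zero]; exact AddEquiv.ulift.symm.injective key)

section Graded

variable [DecidableEq ι] (𝒜 : ι → AddSubgroup S) [GradedRing 𝒜]

theorem proj_mul_of_mem_left {g : ι} {w : S} (hw : w ∈ 𝒜 g) (x : S) (k : ι) :
    proj 𝒜 (g + k) (w * x) = w * proj 𝒜 k x :=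
  DirectSum.coe_decompose_mul_add_of_left_mem 𝒜 hw

theorem proj_mul_of_mem_right {g : ι} {w : S} (hw : w ∈ 𝒜 g) (x : S) (k : ι) :
    proj 𝒜 (k + g) (x * w) = proj 𝒜 k x * w :=
  DirectSum.coe_decompose_mul_add_of_right_mem 𝒜 hw

theorem proj_mem (g : ι) (x : S) : proj 𝒜 g x ∈ 𝒜 g :=
  SetLike.coe_mem _

theorem hasFiniteSupport_proj (x : S) : Function.HasFiniteSupport fun g => proj 𝒜 g x := by
  classical
  exact (DirectSum.decompose 𝒜 x).support.finite_toSet.subset fun g hg =>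
    (mem_support_iff 𝒜 x g).2 hg

theorem finsum_proj (x : S) : ∑ᶠ g, proj 𝒜 g x = x := by
  classical
  rw [finsum_eq_sum_of_support_subset _ fun g hg => (mem_support_iff 𝒜 x g).2 hg]
  exact DirectSum.sum_support_decompose 𝒜 x

theorem finsum_proj_mul_proj_neg (x y : S) :
    ∑ᶠ g, proj 𝒜 g x * proj 𝒜 (-g) y = proj 𝒜 0 (x * y) := by
  have hfin := hasFiniteSupport_proj 𝒜 x
  calc ∑ᶠ g, proj 𝒜 g x * proj 𝒜 (-g) y = ∑ᶠ g, proj 𝒜 0 (proj 𝒜 g x * y) := by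
        refine finsum_congr fun g => ?_
        rw [← add_neg_cancel g, proj_mul_of_mem_left 𝒜 (proj_mem 𝒜 g x)]
    _ = proj 𝒜 0 ((∑ᶠ g, proj 𝒜 g x) * y) := by
        rw [finsum_mul' _ _ hfin, (proj 𝒜 0).map_finsum (f := fun g => proj 𝒜 g x * y)
          (hfin.mul_left _)]
    _ = proj 𝒜 0 (x * y) := by rw [finsum_proj]

variable {n : ℕ} (a b : Fin n → S)

/-- For a separability element `Σᵢ aᵢ ⊗ bᵢ`, `sepCoeff 𝒜 a b 0` is the paper's central element
`c = Σᵢ (aᵢ)_e (bᵢ)_e`, and `sepCoeff 𝒜 a b g` turns out to be `γ_g(c)`. -/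
def sepCoeff (g : ι) : S :=
  ∑ i, proj 𝒜 g (a i) * proj 𝒜 (-g) (b i)

theorem sepCoeff_mem_zero (g : ι) : sepCoeff 𝒜 a b g ∈ 𝒜 0 := by
  refine sum_mem fun i _ => ?_
  simpa using SetLike.mul_mem_graded (proj_mem 𝒜 g (a i)) (proj_mem 𝒜 (-g) (b i))

theorem hasFiniteSupport_sepCoeff : Function.HasFiniteSupport (sepCoeff 𝒜 a b) :=
  Function.HasFiniteSupport.sum
    (fun i => (hasFiniteSupport_proj 𝒜 (a i)).mul_left fun g => proj 𝒜 (-g) (b i)) _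

theorem finsum_sepCoeff (hab : ∑ i, a i * b i = 1) : ∑ᶠ g, sepCoeff 𝒜 a b g = 1 := by
  unfold sepCoeff
  rw [finsum_sum_comm _ (fun g i => proj 𝒜 g (a i) * proj 𝒜 (-g) (b i))
    fun i _ => (hasFiniteSupport_proj 𝒜 (a i)).mul_left _]
  simp only [finsum_proj_mul_proj_neg, ← map_sum, hab]
  exact DirectSum.decompose_of_mem_same 𝒜 (SetLike.one_mem_graded 𝒜)

theorem mul_sepCoeff_of_forall_mul_eq {g : ι} {e : S} (he : ∀ s ∈ 𝒜 g, e * s = s) :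
    e * sepCoeff 𝒜 a b g = sepCoeff 𝒜 a b g := by
  simp only [sepCoeff, Finset.mul_sum, ← mul_assoc]
  exact Finset.sum_congr rfl fun i _ => by rw [he _ (proj_mem 𝒜 g (a i))]

variable {𝒜 a b}

theorem IsSepElt.sum_proj_mul_proj {R : AddSubgroup S} (hR : R ≤ 𝒜 0) (hab : IsSepElt.{u} R a b)
    (g k : ι) (s : S) :
    ∑ i, proj 𝒜 g (s * a i) * proj 𝒜 k (b i) = ∑ i, proj 𝒜 g (a i) * proj 𝒜 k (b i * s) := by
  refine hab.sum_mul_left_eq_sum_mul_right (fun x y => proj 𝒜 g x * proj 𝒜 k y)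
    (fun x x' y => by simp only [map_add, add_mul]) (fun x y y' => by simp only [map_add, mul_add])
    (fun r hr x y => ?_) s
  have hx : proj 𝒜 g (x * r) = proj 𝒜 g x * r :=
    DirectSum.coe_decompose_mul_of_right_mem_zero 𝒜 (hR hr)
  have hy : proj 𝒜 k (r * y) = r * proj 𝒜 k y :=
    DirectSum.coe_decompose_mul_of_left_mem_zero 𝒜 (hR hr)
  rw [hx, hy, mul_assoc]

theorem IsSepElt.sepCoeff_zero_mul_of_mem {R : AddSubgroup S} (hR : R ≤ 𝒜 0)
    (hab : IsSepElt.{u} R a b) {g : ι} {w : S} (hw : w ∈ 𝒜 g) :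
    sepCoeff 𝒜 a b 0 * w = w * sepCoeff 𝒜 a b (-g) :=
  calc sepCoeff 𝒜 a b 0 * w = ∑ i, proj 𝒜 0 (a i) * proj 𝒜 g (b i * w) := by
        simp only [sepCoeff, neg_zero, Finset.sum_mul]
        refine Finset.sum_congr rfl fun i _ => ?_
        rw [mul_assoc, ← proj_mul_of_mem_right 𝒜 hw, zero_add]
    _ = ∑ i, proj 𝒜 0 (w * a i) * proj 𝒜 g (b i) := (hab.sum_proj_mul_proj hR 0 g w).symm
    _ = w * sepCoeff 𝒜 a b (-g) := by
        simp only [sepCoeff, neg_neg, Finset.mul_sum]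
        refine Finset.sum_congr rfl fun i _ => ?_
        rw [← add_neg_cancel g, proj_mul_of_mem_left 𝒜 hw, mul_assoc]

theorem IsSepElt.sum_mul_sepCoeff_zero_mul {R : AddSubgroup S} (hR : R ≤ 𝒜 0)
    (hab : IsSepElt.{u} R a b) {g : ι} {m : ℕ} (u : Fin m → S) {v : Fin m → S}
    (hv : ∀ j, v j ∈ 𝒜 (-g)) :
    ∑ j, u j * sepCoeff 𝒜 a b 0 * v j = (∑ j, u j * v j) * sepCoeff 𝒜 a b g := by
  rw [Finset.sum_mul]
  refine Finset.sum_congr rfl fun j _ => ?_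
  rw [mul_assoc, hab.sepCoeff_zero_mul_of_mem hR (hv j), neg_neg, mul_assoc]

theorem IsSepElt.sepCoeff_zero_mul_sum {R : AddSubgroup S} (hR : R ≤ 𝒜 0)
    (hab : IsSepElt.{u} R a b) {g : ι} {m : ℕ} {u : Fin m → S} (hu : ∀ j, u j ∈ 𝒜 g)
    (v : Fin m → S) :
    sepCoeff 𝒜 a b 0 * ∑ j, u j * v j = ∑ j, u j * sepCoeff 𝒜 a b (-g) * v j := by
  rw [Finset.mul_sum]
  refine Finset.sum_congr rfl fun j _ => ?_
  rw [← mul_assoc, hab.sepCoeff_zero_mul_of_mem hR (hu j)]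

end Graded

theorem trace_one_of_separable_general [DecidableEq ι] (𝒜 : ι → AddSubgroup S) [GradedRing 𝒜]
    (ε : ι → S)
    (hid : ∀ g : ι, ∀ s ∈ 𝒜 g, ε g * s = s ∧ s * ε (-g) = s)
    (γ : ι → S → S)
    (hγ : ∀ g : ι, ∃ (n : ℕ) (u v : Fin n → S), (∀ i, u i ∈ 𝒜 g) ∧ (∀ i, v i ∈ 𝒜 (-g)) ∧
      (∑ i, u i * v i = ε g) ∧ ∀ s : S, γ g s = ∑ i, u i * s * v i)
    (hsep : IsSepExt.{u} (𝒜 0)) :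
    ∃ c : S, c ∈ 𝒜 0 ∧ (∀ x ∈ 𝒜 0, c * x = x * c) ∧
      {g : ι | c * ε g ≠ 0}.Finite ∧ ∑ᶠ g : ι, γ g c = 1 := by
  obtain ⟨n, a, b, hab⟩ := hsep
  have hγc (g : ι) : γ g (sepCoeff 𝒜 a b 0) = sepCoeff 𝒜 a b g := by
    obtain ⟨m, u, v, -, hv, huv, hγg⟩ := hγ g
    rw [hγg, hab.sum_mul_sepCoeff_zero_mul le_rfl u hv, huv,
      mul_sepCoeff_of_forall_mul_eq 𝒜 a b fun s hs => (hid g s hs).1]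
  refine ⟨sepCoeff 𝒜 a b 0, sepCoeff_mem_zero 𝒜 a b 0,
    fun r hr => by simpa using hab.sepCoeff_zero_mul_of_mem le_rfl hr, ?_, ?_⟩
  · refine ((hasFiniteSupport_sepCoeff 𝒜 a b).preimage neg_injective.injOn).subset
      fun g hg hzero => hg ?_
    obtain ⟨m, u, v, hu, -, huv, -⟩ := hγ g
    rw [← huv, hab.sepCoeff_zero_mul_sum le_rfl hu]
    simp [hzero]
  · simpa only [hγc] using finsum_sepCoeff 𝒜 a b hab.1

/-- If the extension `S/R` is separable, then there is `c ∈ Z(R)` with `c ε_g = 0` for all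
but finitely many `g` and `Σ_g γ_g(c) = 1`. -/
theorem trace_one_of_separable [DecidableEq ι] (𝒜 : ι → AddSubgroup S) [GradedRing 𝒜]
    (h : IsEpsilonStronglyGraded 𝒜) (ε : ι → S)
    (hmem : ∀ g : ι, ε g ∈ 𝒜 g * 𝒜 (-g))
    (hid : ∀ g : ι, ∀ s ∈ 𝒜 g, ε g * s = s ∧ s * ε (-g) = s)
    (γ : ι → S → S)
    (hγ : ∀ g : ι, ∃ (n : ℕ) (u v : Fin n → S), (∀ i, u i ∈ 𝒜 g) ∧ (∀ i, v i ∈ 𝒜 (-g)) ∧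
      (∑ i, u i * v i = ε g) ∧ ∀ s : S, γ g s = ∑ i, u i * s * v i)
    (hsep : IsSepExt.{u} (𝒜 0)) :
    ∃ c : S, c ∈ 𝒜 0 ∧ (∀ x ∈ 𝒜 0, c * x = x * c) ∧
      {g : ι | c * ε g ≠ 0}.Finite ∧ ∑ᶠ g : ι, γ g c = 1 :=
  trace_one_of_separable_general 𝒜 ε hid γ hγ hsep
end

section
/- Let S be epsilon-strongly graded by a group G with R = S_e. The trace map tr_γ : Z(R)_fin → Z(R), tr_γ(r) = Σ_{g∈G} γ_g(r), takes values in the set Z(R)_fin^γ of elements r ∈ Z(R)_fin with γ_g(r) = r ε_g for all g ∈ G, and tr_γ is a Z(R)_fin^γ-bimodule homomorphism: tr_γ(r' r r'') = r' tr_γ(r) r'' for r ∈ Z(R)_fin and r', r'' ∈ Z(R)_fin^γ. -/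
/-!
For central `r ∈ R` and `s ∈ S_m`, each `v_i s` lies in `R` and so commutes with `r`; hence
`γ_m(r) s = Σ u_i v_i s r = ε_m s r = s r`. This one identity gives the centrality of `γ_g(r)`,
the composition rule `γ_g(γ_h(r)) = γ_{g+h}(r) ε_g`, and, for `γ`-invariant central `r'`, that `r'`
commutes with all of `S_g` (`s r' = γ_g(r') s = r' ε_g s = r' s`). Applying `γ_g` to the trace
then only reindexes the sum, and the bimodule property holds termwise.
-/
open Pointwise

variable {S : Type*} [Ring S] {ι : Type*} [AddGroup ι]

/-- The set `Z(R)_fin` of central elements `r` of `R = S_e` with `r ε_g = 0` for all but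
finitely many `g`. -/
def ZFin (𝒜 : ι → AddSubgroup S) (ε : ι → S) : Set S :=
  {r | (r ∈ 𝒜 0 ∧ ∀ x ∈ 𝒜 0, r * x = x * r) ∧ {g : ι | r * ε g ≠ 0}.Finite}

theorem SetLike.mul_mem_graded_of_add_eq {R σ : Type*} [SetLike σ R] [Mul R] {A : ι → σ}
    [SetLike.GradedMul A] {i j k : ι} {a b : R} (ha : a ∈ A i) (hb : b ∈ A j)
    (hk : i + j = k) : a * b ∈ A k :=
  hk ▸ SetLike.mul_mem_graded ha hb

def IsLocalUnits (𝒜 : ι → AddSubgroup S) (ε : ι → S) : Prop :=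
  ∀ g, ∀ s ∈ 𝒜 g, ε g * s = s ∧ s * ε (-g) = s

def IsGammaMap (𝒜 : ι → AddSubgroup S) (ε : ι → S) (g : ι) (f : S → S) : Prop :=
  ∃ (n : ℕ) (u v : Fin n → S), (∀ i, u i ∈ 𝒜 g) ∧ (∀ i, v i ∈ 𝒜 (-g)) ∧
    (∑ i, u i * v i = ε g) ∧ ∀ s : S, f s = ∑ i, u i * s * v i

variable {𝒜 : ι → AddSubgroup S} {ε : ι → S}

namespace IsLocalUnits

variable {g : ι} {s : S}

theorem eps_mul (hε : IsLocalUnits 𝒜 ε) (hs : s ∈ 𝒜 g) : ε g * s = s :=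
  (hε g s hs).1

theorem mul_eps (hε : IsLocalUnits 𝒜 ε) (hs : s ∈ 𝒜 (-g)) : s * ε g = s := by
  simpa using (hε (-g) s hs).2

end IsLocalUnits

namespace IsGammaMap

variable {g h : ι} {f f' F : S → S} {r s y a b : S}

theorem map_zero (hf : IsGammaMap 𝒜 ε g f) : f 0 = 0 := by
  obtain ⟨n, u, v, -, -, -, hf⟩ := hf
  simp [hf]

theorem map_add (hf : IsGammaMap 𝒜 ε g f) (a b : S) : f (a + b) = f a + f b := by
  obtain ⟨n, u, v, -, -, -, hf⟩ := hf
  simp only [hf, mul_add, add_mul, Finset.sum_add_distrib]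

theorem map_finsum {α : Type*} (hf : IsGammaMap 𝒜 ε g f) {φ : α → S}
    (hφ : φ.HasFiniteSupport) : f (∑ᶠ x, φ x) = ∑ᶠ x, f (φ x) :=
  AddMonoidHom.map_finsum ⟨⟨f, hf.map_zero⟩, hf.map_add⟩ hφ

theorem mem_zero [SetLike.GradedMonoid 𝒜] (hf : IsGammaMap 𝒜 ε g f) (hr : r ∈ 𝒜 0) :
    f r ∈ 𝒜 0 := by
  obtain ⟨n, u, v, hu, hv, -, hf⟩ := hf
  rw [hf]
  exact sum_mem fun i _ => SetLike.mul_mem_graded_of_add_eq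
    (SetLike.mul_mem_graded_of_add_eq (hu i) hr (add_zero g)) (hv i) (add_neg_cancel g)

theorem eq_zero_of_mul_eps_neg (hε : IsLocalUnits 𝒜 ε) (hf : IsGammaMap 𝒜 ε g f)
    (hr : r * ε (-g) = 0) : f r = 0 := by
  obtain ⟨n, u, v, -, hv, -, hf⟩ := hf
  rw [hf]
  refine Finset.sum_eq_zero fun i _ => ?_
  rw [← hε.eps_mul (hv i), ← mul_assoc, mul_assoc (u i), hr, mul_zero, zero_mul]

theorem eps_mul_apply (hε : IsLocalUnits 𝒜 ε) (hf : IsGammaMap 𝒜 ε g f) :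
    ε g * f y = f y := by
  obtain ⟨n, u, v, hu, -, -, hf⟩ := hf
  simp only [hf, Finset.mul_sum, ← mul_assoc, hε.eps_mul (hu _)]

theorem apply_mul_of_mem [SetLike.GradedMonoid 𝒜] (hε : IsLocalUnits 𝒜 ε)
    (hf : IsGammaMap 𝒜 ε g f) (hr : ∀ x ∈ 𝒜 0, r * x = x * r) (hs : s ∈ 𝒜 g) :
    f r * s = s * r := by
  obtain ⟨n, u, v, -, hv, hsum, hf⟩ := hf
  calc f r * s = ∑ i, u i * (r * (v i * s)) := by simp only [hf, Finset.sum_mul, mul_assoc]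
    _ = ∑ i, u i * v i * (s * r) := by
      refine Finset.sum_congr rfl fun i _ => ?_
      rw [hr _ (SetLike.mul_mem_graded_of_add_eq (hv i) hs (neg_add_cancel g))]
      simp only [mul_assoc]
    _ = s * r := by rw [← Finset.sum_mul, hsum, ← mul_assoc, hε.eps_mul hs]

theorem mul_apply_of_mem_neg [SetLike.GradedMonoid 𝒜] (hε : IsLocalUnits 𝒜 ε)
    (hf : IsGammaMap 𝒜 ε g f) (hr : ∀ x ∈ 𝒜 0, r * x = x * r) (hs : s ∈ 𝒜 (-g)) :
    s * f r = r * s := by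
  obtain ⟨n, u, v, hu, -, hsum, hf⟩ := hf
  calc s * f r = ∑ i, (s * u i) * r * v i := by simp only [hf, Finset.mul_sum, mul_assoc]
    _ = ∑ i, r * (s * (u i * v i)) := by
      refine Finset.sum_congr rfl fun i _ => ?_
      rw [← hr _ (SetLike.mul_mem_graded_of_add_eq hs (hu i) (neg_add_cancel g))]
      simp only [mul_assoc]
    _ = r * s := by rw [← Finset.mul_sum, ← Finset.mul_sum, hsum, hε.mul_eps hs]

theorem apply_mul_comm [SetLike.GradedMonoid 𝒜] (hε : IsLocalUnits 𝒜 ε)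
    (hf : IsGammaMap 𝒜 ε g f) (hr : ∀ x ∈ 𝒜 0, r * x = x * r) (hs : s ∈ 𝒜 0) :
    f r * s = s * f r := by
  obtain ⟨n, u, v, hu, hv, hsum, hf'⟩ := id hf
  have mul_apply : s * f r = f r * s * ε g :=
    calc s * f r = ∑ i, (s * u i) * r * v i := by simp only [hf', Finset.mul_sum, mul_assoc]
      _ = ∑ i, f r * s * (u i * v i) := by
        refine Finset.sum_congr rfl fun i _ => ?_
        rw [← hf.apply_mul_of_mem hε hr
          (SetLike.mul_mem_graded_of_add_eq hs (hu i) (zero_add g))]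
        simp only [mul_assoc]
      _ = f r * s * ε g := by rw [← Finset.mul_sum, hsum]
  have apply_mul : f r * s = ε g * (s * f r) :=
    calc f r * s = ∑ i, u i * (r * (v i * s)) := by simp only [hf', Finset.sum_mul, mul_assoc]
      _ = ∑ i, u i * v i * (s * f r) := by
        refine Finset.sum_congr rfl fun i _ => ?_
        rw [← hf.mul_apply_of_mem_neg hε hr
          (SetLike.mul_mem_graded_of_add_eq (hv i) hs (add_zero _))]
        simp only [mul_assoc]
      _ = ε g * (s * f r) := by rw [← Finset.sum_mul, hsum]
  calc f r * s = ε g * f r * s * ε g := by rw [apply_mul, mul_apply]; simp only [mul_assoc]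
    _ = s * f r := by rw [hf.eps_mul_apply hε, mul_apply]

theorem apply_mul_mul_eps [SetLike.GradedMonoid 𝒜] (hε : IsLocalUnits 𝒜 ε)
    (hF : IsGammaMap 𝒜 ε (g + h) F) (ha : a ∈ 𝒜 g) : F y * (a * ε h) = F y * a := by
  obtain ⟨n, u, v, -, hv, -, hF⟩ := hF
  simp only [hF, Finset.sum_mul, mul_assoc]
  refine Finset.sum_congr rfl fun k _ => ?_
  rw [← mul_assoc (v k) a, hε.mul_eps (SetLike.mul_mem_graded_of_add_eq (hv k) ha
    (by rw [neg_add_rev, neg_add_cancel_right]))]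

theorem apply_apply [SetLike.GradedMonoid 𝒜] (hε : IsLocalUnits 𝒜 ε)
    (hf : IsGammaMap 𝒜 ε g f) (hf' : IsGammaMap 𝒜 ε h f') (hF : IsGammaMap 𝒜 ε (g + h) F)
    (hr : ∀ x ∈ 𝒜 0, r * x = x * r) : f (f' r) = F r * ε g := by
  obtain ⟨n, u, v, hu, -, hsum, hf⟩ := hf
  obtain ⟨m, u', v', hu', -, hsum', hf'⟩ := hf'
  calc f (f' r) = ∑ i, ∑ j, u i * u' j * r * (v' j * v i) := by
        simp only [hf, hf', Finset.mul_sum, Finset.sum_mul, mul_assoc]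
    _ = ∑ i, ∑ j, F r * (u i * (u' j * v' j) * v i) := by
        refine Finset.sum_congr rfl fun i _ => Finset.sum_congr rfl fun j _ => ?_
        rw [← hF.apply_mul_of_mem hε hr (SetLike.mul_mem_graded (hu i) (hu' j))]
        simp only [mul_assoc]
    _ = ∑ i, F r * (u i * ε h) * v i := by
        refine Finset.sum_congr rfl fun i _ => ?_
        rw [← Finset.mul_sum, ← Finset.sum_mul, ← Finset.mul_sum, hsum']
        simp only [mul_assoc]
    _ = F r * ε g := by
        simp only [hF.apply_mul_mul_eps hε (hu _), mul_assoc, ← Finset.mul_sum, hsum]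

theorem mul_comm_of_apply_eq [SetLike.GradedMonoid 𝒜] (hε : IsLocalUnits 𝒜 ε)
    (hf : IsGammaMap 𝒜 ε g f) (hr : ∀ x ∈ 𝒜 0, r * x = x * r) (hinv : f r = r * ε g)
    (hs : s ∈ 𝒜 g) : s * r = r * s := by
  rw [← hf.apply_mul_of_mem hε hr hs, hinv, mul_assoc, hε.eps_mul hs]

theorem apply_mul_mul (hf : IsGammaMap 𝒜 ε g f) (ha : ∀ s ∈ 𝒜 g, s * a = a * s)
    (hb : ∀ s ∈ 𝒜 (-g), s * b = b * s) : f (a * r * b) = a * f r * b := by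
  obtain ⟨n, u, v, hu, hv, -, hf⟩ := hf
  simp only [hf, Finset.mul_sum, Finset.sum_mul]
  refine Finset.sum_congr rfl fun i _ => ?_
  calc u i * (a * r * b) * v i = u i * a * r * (b * v i) := by simp only [mul_assoc]
    _ = a * (u i * r * v i) * b := by rw [ha _ (hu i), ← hb _ (hv i)]; simp only [mul_assoc]

end IsGammaMap

section Trace

variable {γ : ι → S → S} {r : S}

theorem hasFiniteSupport_gamma (hε : IsLocalUnits 𝒜 ε) (hγ : ∀ g, IsGammaMap 𝒜 ε g (γ g))
    (hr : {g | r * ε g ≠ 0}.Finite) : (fun g => γ g r).HasFiniteSupport :=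
  (hr.preimage neg_injective.injOn).subset fun g hg h0 =>
    hg ((hγ g).eq_zero_of_mul_eps_neg hε h0)

theorem gamma_finsum_gamma [SetLike.GradedMonoid 𝒜] (hε : IsLocalUnits 𝒜 ε)
    (hγ : ∀ g, IsGammaMap 𝒜 ε g (γ g))
    (hr : ∀ x ∈ 𝒜 0, r * x = x * r) (hfin : (fun g => γ g r).HasFiniteSupport) (g : ι) :
    γ g (∑ᶠ h, γ h r) = (∑ᶠ h, γ h r) * ε g :=
  calc γ g (∑ᶠ h, γ h r) = ∑ᶠ h, γ (g + h) r * ε g := by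
        rw [(hγ g).map_finsum hfin]
        exact finsum_congr fun h => (hγ g).apply_apply hε (hγ h) (hγ (g + h)) hr
    _ = ∑ᶠ h, γ h r * ε g := finsum_comp_equiv (Equiv.addLeft g) (f := fun h => γ h r * ε g)
    _ = (∑ᶠ h, γ h r) * ε g := (finsum_mul' _ _ hfin).symm

theorem finsum_gamma_mem_ZFin [SetLike.GradedMonoid 𝒜] (hε : IsLocalUnits 𝒜 ε)
    (hγ : ∀ g, IsGammaMap 𝒜 ε g (γ g))
    (hr : r ∈ 𝒜 0 ∧ ∀ x ∈ 𝒜 0, r * x = x * r) (hfin : (fun g => γ g r).HasFiniteSupport) :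
    ∑ᶠ h, γ h r ∈ ZFin 𝒜 ε := by
  refine ⟨⟨finsum_induction (· ∈ 𝒜 0) (zero_mem _) (fun _ _ => add_mem)
    fun h => (hγ h).mem_zero hr.1, fun x hx => ?_⟩, ?_⟩
  · exact finsum_induction (fun y => y * x = x * y) (by simp)
      (fun a b ha hb => by rw [add_mul, mul_add, ha, hb])
      fun h => (hγ h).apply_mul_comm hε hr.2 hx
  · -- `(Σ_h γ_h r) ε_g = Σ_h γ_g (γ_h r)`, and a nonzero term puts both `h` and `g + h` in the
    -- support of `γ · r`
    refine (hfin.image2 (· - ·) hfin).subset fun g hg => ?_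
    replace hg : (∑ᶠ h, γ h r) * ε g ≠ 0 := hg
    rw [← gamma_finsum_gamma hε hγ hr.2 hfin, (hγ g).map_finsum hfin] at hg
    obtain ⟨h, hh⟩ : ∃ h, γ g (γ h r) ≠ 0 := by
      by_contra! hzero
      exact hg (finsum_eq_zero_of_forall_eq_zero hzero)
    refine ⟨g + h, fun h0 : γ (g + h) r = 0 => hh ?_, h, fun h0 : γ h r = 0 => hh ?_,
      add_sub_cancel_right g h⟩
    · rw [(hγ g).apply_apply hε (hγ h) (hγ (g + h)) hr.2, h0, zero_mul]
    · rw [h0, (hγ g).map_zero]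

theorem finsum_gamma_mul_mul [SetLike.GradedMonoid 𝒜] (hε : IsLocalUnits 𝒜 ε)
    (hγ : ∀ g, IsGammaMap 𝒜 ε g (γ g))
    {a b : S} (ha : ∀ x ∈ 𝒜 0, a * x = x * a) (hb : ∀ x ∈ 𝒜 0, b * x = x * b)
    (ha' : ∀ g, γ g a = a * ε g) (hb' : ∀ g, γ g b = b * ε g)
    (hfin : (fun g => γ g r).HasFiniteSupport) :
    ∑ᶠ g, γ g (a * r * b) = a * (∑ᶠ g, γ g r) * b := by
  rw [mul_finsum' _ _ hfin, finsum_mul' _ _ (hfin.fun_mul_right _)]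
  exact finsum_congr fun g => (hγ g).apply_mul_mul
    (fun s hs => (hγ g).mul_comm_of_apply_eq hε ha (ha' g) hs)
    (fun s hs => (hγ (-g)).mul_comm_of_apply_eq hε hb (hb' (-g)) hs)

end Trace

theorem trace_into_invariants_and_bimodule_general [DecidableEq ι]
    (𝒜 : ι → AddSubgroup S) [GradedRing 𝒜]
    (ε : ι → S)
    (hid : ∀ g : ι, ∀ s ∈ 𝒜 g, ε g * s = s ∧ s * ε (-g) = s)
    (γ : ι → S → S)
    (hγ : ∀ g : ι, ∃ (n : ℕ) (u v : Fin n → S), (∀ i, u i ∈ 𝒜 g) ∧ (∀ i, v i ∈ 𝒜 (-g)) ∧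
      (∑ i, u i * v i = ε g) ∧ ∀ s : S, γ g s = ∑ i, u i * s * v i) :
    (∀ r ∈ ZFin 𝒜 ε, (∑ᶠ g : ι, γ g r) ∈ ZFin 𝒜 ε ∧
      ∀ g : ι, γ g (∑ᶠ g' : ι, γ g' r) = (∑ᶠ g' : ι, γ g' r) * ε g) ∧
    (∀ r ∈ ZFin 𝒜 ε, ∀ r' ∈ ZFin 𝒜 ε, ∀ r'' ∈ ZFin 𝒜 ε,
      (∀ g : ι, γ g r' = r' * ε g) → (∀ g : ι, γ g r'' = r'' * ε g) →
      ∑ᶠ g : ι, γ g (r' * r * r'') = r' * (∑ᶠ g : ι, γ g r) * r'') := by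
  refine ⟨fun r hr => ?_, fun r hr r' hr' r'' hr'' hinv' hinv'' => ?_⟩
  · have hfin := hasFiniteSupport_gamma hid hγ hr.2
    exact ⟨finsum_gamma_mem_ZFin hid hγ hr.1 hfin, gamma_finsum_gamma hid hγ hr.1.2 hfin⟩
  · exact finsum_gamma_mul_mul hid hγ hr'.1.2 hr''.1.2 hinv' hinv''
      (hasFiniteSupport_gamma hid hγ hr.2)

/-- The trace map `tr_γ(r) = Σ_g γ_g(r)` maps `Z(R)_fin` into `Z(R)_fin^γ`
(the elements `r` of `Z(R)_fin` with `γ_g(r) = r ε_g` for all `g`), and it is a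
`Z(R)_fin^γ`-bimodule homomorphism. -/
theorem trace_into_invariants_and_bimodule [DecidableEq ι]
    (𝒜 : ι → AddSubgroup S) [GradedRing 𝒜]
    (h : IsEpsilonStronglyGraded 𝒜) (ε : ι → S)
    (hmem : ∀ g : ι, ε g ∈ 𝒜 g * 𝒜 (-g))
    (hid : ∀ g : ι, ∀ s ∈ 𝒜 g, ε g * s = s ∧ s * ε (-g) = s)
    (γ : ι → S → S)
    (hγ : ∀ g : ι, ∃ (n : ℕ) (u v : Fin n → S), (∀ i, u i ∈ 𝒜 g) ∧ (∀ i, v i ∈ 𝒜 (-g)) ∧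
      (∑ i, u i * v i = ε g) ∧ ∀ s : S, γ g s = ∑ i, u i * s * v i) :
    (∀ r ∈ ZFin 𝒜 ε, (∑ᶠ g : ι, γ g r) ∈ ZFin 𝒜 ε ∧
      ∀ g : ι, γ g (∑ᶠ g' : ι, γ g' r) = (∑ᶠ g' : ι, γ g' r) * ε g) ∧
    (∀ r ∈ ZFin 𝒜 ε, ∀ r' ∈ ZFin 𝒜 ε, ∀ r'' ∈ ZFin 𝒜 ε,
      (∀ g : ι, γ g r' = r' * ε g) → (∀ g : ι, γ g r'' = r'' * ε g) →
      ∑ᶠ g : ι, γ g (r' * r * r'') = r' * (∑ᶠ g : ι, γ g r) * r'') :=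
  trace_into_invariants_and_bimodule_general 𝒜 ε hid γ hγ
end

section
/- Let S be epsilon-strongly graded by a group G with R = S_e. If I is a non-zero ideal of S, then I ∩ C_S(Z(R)) ≠ {0}, where C_S(Z(R)) is the centralizer in S of the center of R. Consequently, if R is a maximal commutative subring of S (C_S(R) = R), then S is simple if and only if S is graded simple. -/
/-!
The units `ε_g` make the grading left non-degenerate, so any nonzero `y` in an ideal `I` can be
moved to some `b * y ∈ I`, `b` homogeneous, with nonzero component in degree `e` and no larger
support. If `x` is such an element of minimal support size and `z ∈ Z(R)`, then `z * x - x * z ∈ I`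
vanishes in degree `e`, so it has strictly smaller support and must be zero.

If `R` is maximal commutative, this `x` lies in `R ∩ I`, hence in the graded ideal of elements all
of whose homogeneous components lie in `I`; graded simplicity makes that ideal, and so `I`, all
of `S`.
-/

open Pointwise

variable {S : Type*} [Ring S] {ι : Type*} [AddGroup ι]

open DirectSum

def IsLeftNondegenerate (𝒜 : ι → AddSubgroup S) : Prop :=
  ∀ g, ∀ s ∈ 𝒜 g, s ≠ 0 → ∃ b ∈ 𝒜 (-g), b * s ≠ 0

theorem exists_mem_mul_ne_zero_of_mem_mul {A B : AddSubgroup S} {e y : S}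
    (he : e ∈ A * B) (hey : e * y = y) (hy : y ≠ 0) : ∃ b ∈ B, b * y ≠ 0 := by
  by_contra! hB
  refine hy (hey ▸ AddSubmonoid.mul_induction_on (C := fun e => e * y = 0) he ?_ ?_)
  · intro a _ b hb
    rw [mul_assoc, hB b hb, mul_zero]
  · intro a b ha hb
    rw [add_mul, ha, hb, add_zero]

theorem isLeftNondegenerate_of_forall_mul_eq_self (𝒜 : ι → AddSubgroup S) (ε : ι → S)
    (hmem : ∀ g, ε g ∈ 𝒜 g * 𝒜 (-g)) (hid : ∀ g, ∀ s ∈ 𝒜 g, ε g * s = s) :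
    IsLeftNondegenerate 𝒜 :=
  fun g s hs hs0 => exists_mem_mul_ne_zero_of_mem_mul (hmem g) (hid g s hs) hs0

section GradedRing

variable [DecidableEq ι] (𝒜 : ι → AddSubgroup S) [GradedRing 𝒜]

theorem coe_decompose_mul_of_left_mem {a : S} {i : ι} (ha : a ∈ 𝒜 i) (b : S) (k : ι) :
    (decompose 𝒜 (a * b) k : S) = a * decompose 𝒜 b (-i + k) := by
  obtain ⟨j, rfl⟩ : ∃ j, k = i + j := ⟨-i + k, (add_neg_cancel_left i k).symm⟩
  rw [neg_add_cancel_left]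
  exact coe_decompose_mul_add_of_left_mem 𝒜 ha

theorem coe_decompose_mul_of_right_mem {b : S} {j : ι} (hb : b ∈ 𝒜 j) (a : S) (k : ι) :
    (decompose 𝒜 (a * b) k : S) = decompose 𝒜 a (k + -j) * b := by
  obtain ⟨i, rfl⟩ : ∃ i, k = i + j := ⟨k + -j, (neg_add_cancel_right k j).symm⟩
  rw [add_neg_cancel_right]
  exact coe_decompose_mul_add_of_right_mem 𝒜 hb

theorem IsLeftNondegenerate.exists_decompose_mul_zero_ne_zero (hnd : IsLeftNondegenerate 𝒜)
    {y : S} (hy : y ≠ 0) : ∃ i, ∃ b ∈ 𝒜 i, decompose 𝒜 (b * y) 0 ≠ 0 := by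
  obtain ⟨g, hg⟩ : ∃ g, decompose 𝒜 y g ≠ 0 := by
    by_contra! h
    exact hy ((decompose 𝒜).injective (by rw [decompose_zero]; exact DFinsupp.ext h))
  obtain ⟨b, hb, hby⟩ := hnd g _ (decompose 𝒜 y g).2 (by simpa using hg)
  refine ⟨-g, b, hb, fun h0 => hby ?_⟩
  have := congrArg Subtype.val h0
  rwa [coe_decompose_mul_of_left_mem 𝒜 hb, neg_neg, add_zero] at this

section Support

variable [∀ i (x : 𝒜 i), Decidable (x ≠ 0)]

theorem card_support_decompose_mul_le_of_left_mem {a : S} {i : ι} (ha : a ∈ 𝒜 i) (b : S) :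
    (decompose 𝒜 (a * b)).support.card ≤ (decompose 𝒜 b).support.card := by
  refine Finset.card_le_card_of_injOn (-i + ·) (fun k hk => ?_) (add_right_injective (-i)).injOn
  rw [Finset.mem_coe, DFinsupp.mem_support_iff] at hk ⊢
  contrapose! hk
  ext1
  rw [coe_decompose_mul_of_left_mem 𝒜 ha, hk, ZeroMemClass.coe_zero, mul_zero,
    ZeroMemClass.coe_zero]

theorem card_support_decompose_commutator_lt {x z : S} (hz : z ∈ 𝒜 0)
    (hzx : z * decompose 𝒜 x 0 = decompose 𝒜 x 0 * z) (hx0 : decompose 𝒜 x 0 ≠ 0) :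
    (decompose 𝒜 (z * x - x * z)).support.card < (decompose 𝒜 x).support.card := by
  have hc (k : ι) : (decompose 𝒜 (z * x - x * z) k : S) =
      z * decompose 𝒜 x k - decompose 𝒜 x k * z := by
    rw [decompose_sub, DirectSum.sub_apply, AddSubgroup.coe_sub,
      coe_decompose_mul_of_left_mem_zero 𝒜 hz, coe_decompose_mul_of_right_mem_zero 𝒜 hz]
  refine Finset.card_lt_card ((Finset.ssubset_iff_of_subset fun k hk => ?_).2 ⟨0, ?_, ?_⟩)
  · rw [DFinsupp.mem_support_iff] at hk ⊢
    contrapose! hk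
    ext1
    rw [hc, hk, ZeroMemClass.coe_zero, mul_zero, zero_mul, sub_zero]
  · exact DFinsupp.mem_support_iff.2 hx0
  · rw [DFinsupp.mem_support_iff, not_not]
    ext1
    rw [hc, hzx, sub_self, ZeroMemClass.coe_zero]

theorem IsLeftNondegenerate.exists_mem_ne_zero_centralizes_center (hnd : IsLeftNondegenerate 𝒜)
    {I : AddSubgroup S} (hI : ∀ s : S, ∀ x ∈ I, s * x ∈ I ∧ x * s ∈ I) {y : S} (hyI : y ∈ I)
    (hy : y ≠ 0) :
    ∃ x ∈ I, x ≠ 0 ∧ ∀ z ∈ 𝒜 0, (∀ r ∈ 𝒜 0, z * r = r * z) → x * z = z * x := by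
  induction hn : (decompose 𝒜 y).support.card using Nat.strong_induction_on generalizing y with
  | _ n ih =>
  obtain ⟨i, b, hb, hx0⟩ := hnd.exists_decompose_mul_zero_ne_zero 𝒜 hy
  have hxI : b * y ∈ I := (hI b y hyI).1
  have hx : b * y ≠ 0 := fun h => hx0 (by rw [h, decompose_zero, DirectSum.zero_apply])
  by_cases hcomm : ∀ z ∈ 𝒜 0, (∀ r ∈ 𝒜 0, z * r = r * z) → b * y * z = z * (b * y)
  · exact ⟨b * y, hxI, hx, hcomm⟩
  push Not at hcomm
  obtain ⟨z, hz, hzc, hne⟩ := hcomm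
  refine ih _ ?_ (I.sub_mem (hI z _ hxI).1 (hI z _ hxI).2) (sub_ne_zero.2 hne.symm) rfl
  calc _ < _ := card_support_decompose_commutator_lt 𝒜 hz (hzc _ (SetLike.coe_mem _)) hx0
    _ ≤ _ := card_support_decompose_mul_le_of_left_mem 𝒜 hb y
    _ = n := hn

end Support

def AddSubgroup.homogeneousCore (I : AddSubgroup S) : AddSubgroup S :=
  ⨅ g, I.comap (GradedRing.proj 𝒜 g)

namespace AddSubgroup

variable {𝒜} {I : AddSubgroup S}

theorem mem_homogeneousCore {x : S} :
    x ∈ I.homogeneousCore 𝒜 ↔ ∀ g, (decompose 𝒜 x g : S) ∈ I := by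
  simp [homogeneousCore]

variable (𝒜 I) in
theorem homogeneousCore_le : I.homogeneousCore 𝒜 ≤ I := by
  classical
  intro x hx
  rw [← sum_support_decompose 𝒜 x]
  exact sum_mem fun g _ => mem_homogeneousCore.1 hx g

theorem mem_homogeneousCore_of_mem {x : S} {i : ι} (hx : x ∈ 𝒜 i) (hxI : x ∈ I) :
    x ∈ I.homogeneousCore 𝒜 := by
  refine mem_homogeneousCore.2 fun g => ?_
  by_cases hg : i = g
  · rwa [← hg, decompose_of_mem_same 𝒜 hx]
  · rw [decompose_of_mem_ne 𝒜 hx hg]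
    exact zero_mem I

theorem decompose_mem_homogeneousCore {x : S} (hx : x ∈ I.homogeneousCore 𝒜) (g : ι) :
    (decompose 𝒜 x g : S) ∈ I.homogeneousCore 𝒜 :=
  mem_homogeneousCore_of_mem (SetLike.coe_mem _) (mem_homogeneousCore.1 hx g)

theorem mul_mem_homogeneousCore (hI : ∀ s : S, ∀ x ∈ I, s * x ∈ I ∧ x * s ∈ I) (s : S) {x : S}
    (hx : x ∈ I.homogeneousCore 𝒜) :
    s * x ∈ I.homogeneousCore 𝒜 ∧ x * s ∈ I.homogeneousCore 𝒜 := by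
  induction s using DirectSum.Decomposition.inductionOn 𝒜 with
  | zero => simp only [zero_mul, mul_zero, zero_mem, and_self]
  | homogeneous s =>
    simp only [mem_homogeneousCore, coe_decompose_mul_of_left_mem 𝒜 s.2,
      coe_decompose_mul_of_right_mem 𝒜 s.2]
    exact ⟨fun g => (hI _ _ (mem_homogeneousCore.1 hx _)).1,
      fun g => (hI _ _ (mem_homogeneousCore.1 hx _)).2⟩
  | add s t hs ht => simpa only [add_mul, mul_add] using ⟨add_mem hs.1 ht.1, add_mem hs.2 ht.2⟩

end AddSubgroup

end GradedRing

theorem ideal_intersects_centralizer_and_simplicity_general [DecidableEq ι]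
    (𝒜 : ι → AddSubgroup S) [GradedRing 𝒜]
    (ε : ι → S)
    (hmem : ∀ g : ι, ε g ∈ 𝒜 g * 𝒜 (-g))
    (hid : ∀ g : ι, ∀ s ∈ 𝒜 g, ε g * s = s ∧ s * ε (-g) = s) :
    -- every non-zero ideal meets the centralizer of Z(R)
    (∀ I : AddSubgroup S, (∀ s : S, ∀ x ∈ I, s * x ∈ I ∧ x * s ∈ I) → I ≠ ⊥ →
      ∃ x ∈ I, x ≠ 0 ∧ ∀ z : S, z ∈ 𝒜 0 → (∀ y ∈ 𝒜 0, z * y = y * z) → x * z = z * x) ∧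
    -- if R is maximal commutative in S, then S is simple iff S is graded simple
    ((∀ s : S, (∀ r ∈ 𝒜 0, s * r = r * s) ↔ s ∈ 𝒜 0) →
      ((∀ I : AddSubgroup S, (∀ s : S, ∀ x ∈ I, s * x ∈ I ∧ x * s ∈ I) → I = ⊥ ∨ I = ⊤) ↔
       (∀ I : AddSubgroup S, (∀ s : S, ∀ x ∈ I, s * x ∈ I ∧ x * s ∈ I) →
          (∀ x ∈ I, ∀ g : ι, ((DirectSum.decompose 𝒜 x) g : S) ∈ I) → I = ⊥ ∨ I = ⊤))) := by
  classical
  have hnd := isLeftNondegenerate_of_forall_mul_eq_self 𝒜 ε hmem fun g s hs => (hid g s hs).1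
  have meets_centralizer (I : AddSubgroup S) (hI : ∀ s : S, ∀ x ∈ I, s * x ∈ I ∧ x * s ∈ I)
      (hI0 : I ≠ ⊥) :
      ∃ x ∈ I, x ≠ 0 ∧ ∀ z ∈ 𝒜 0, (∀ y ∈ 𝒜 0, z * y = y * z) → x * z = z * x := by
    obtain ⟨y, hyI, hy⟩ := I.bot_or_exists_ne_zero.resolve_left hI0
    exact hnd.exists_mem_ne_zero_centralizes_center 𝒜 hI hyI hy
  refine ⟨meets_centralizer, fun hmax => ⟨fun hsimple I hI _ => hsimple I hI, fun hgr I hI => ?_⟩⟩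
  refine or_iff_not_imp_left.2 fun hI0 => ?_
  obtain ⟨x, hxI, hx, hxc⟩ := meets_centralizer I hI hI0
  -- a maximal commutative `R` is its own centre, so `x` centralizes `R` and hence lies in `R`
  have hxR : x ∈ 𝒜 0 := (hmax x).1 fun r hr => hxc r hr fun y hy => (hmax r).2 hr y hy
  rcases hgr (I.homogeneousCore 𝒜) (fun s _ => AddSubgroup.mul_mem_homogeneousCore hI s)
    (fun _ => AddSubgroup.decompose_mem_homogeneousCore) with hbot | htop
  · exact absurd (hbot ▸ AddSubgroup.mem_homogeneousCore_of_mem hxR hxI) (by simpa using hx)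
  · exact top_le_iff.1 (htop ▸ AddSubgroup.homogeneousCore_le 𝒜 I)

/-- Every non-zero (two-sided) ideal of an epsilon-strongly graded ring intersects the
centralizer of `Z(R)` non-trivially; consequently, if `R = S_e` is a maximal commutative
subring of `S`, then `S` is simple iff `S` is graded simple. -/
theorem ideal_intersects_centralizer_and_simplicity [DecidableEq ι]
    (𝒜 : ι → AddSubgroup S) [GradedRing 𝒜]
    (h : IsEpsilonStronglyGraded 𝒜) (ε : ι → S)
    (hmem : ∀ g : ι, ε g ∈ 𝒜 g * 𝒜 (-g))
    (hid : ∀ g : ι, ∀ s ∈ 𝒜 g, ε g * s = s ∧ s * ε (-g) = s) :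
    -- every non-zero ideal meets the centralizer of Z(R)
    (∀ I : AddSubgroup S, (∀ s : S, ∀ x ∈ I, s * x ∈ I ∧ x * s ∈ I) → I ≠ ⊥ →
      ∃ x ∈ I, x ≠ 0 ∧ ∀ z : S, z ∈ 𝒜 0 → (∀ y ∈ 𝒜 0, z * y = y * z) → x * z = z * x) ∧
    -- if R is maximal commutative in S, then S is simple iff S is graded simple
    ((∀ s : S, (∀ r ∈ 𝒜 0, s * r = r * s) ↔ s ∈ 𝒜 0) →
      ((∀ I : AddSubgroup S, (∀ s : S, ∀ x ∈ I, s * x ∈ I ∧ x * s ∈ I) → I = ⊥ ∨ I = ⊤) ↔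
       (∀ I : AddSubgroup S, (∀ s : S, ∀ x ∈ I, s * x ∈ I ∧ x * s ∈ I) →
          (∀ x ∈ I, ∀ g : ι, ((DirectSum.decompose 𝒜 x) g : S) ∈ I) → I = ⊥ ∨ I = ⊤))) :=
  ideal_intersects_centralizer_and_simplicity_general 𝒜 ε hmem hid
end
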